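/- Let Q be a unital involutive quantale with a stable support ς. Then ς a = e ∧ (a a*) for all a ∈ Q, and ς is the unique support on Q: any map ς' : Q → Q preserving arbitrary suprema and satisfying ς' a ≤ e, ς' a ≤ a a*, and a ≤ (ς' a) a for all a, equals ς. -/

import Mathlib

/-!
Every support fixes the elements `b ≤ e`: `ς b ≤ b b* ≤ b e* = b` and `b ≤ (ς b) b ≤ (ς b) e = ς b`.
For a stable support this gives `e ∧ a a* = ς (e ∧ a a*) ≤ ς (a a*) ≤ ς a`, the reverse inequality
being two of the support axioms. If `ς'` is another support, then `ς' a ≤ e ∧ a a* = ς a`, and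
conversely `ς a ≤ ς ((ς' a) a) ≤ ς (ς' a) = ς' a` by stability and since `ς' a ≤ e`.
-/

theorem monotone_of_map_sSup {α β : Type*} [CompleteLattice α] [CompleteLattice β] {f : α → β}
    (hf : ∀ s : Set α, f (sSup s) = sSup (f '' s)) : Monotone f :=
  OrderHomClass.mono (⟨f, hf⟩ : sSupHom α β)

theorem star_unit_eq {Q : Type*} {m : Q → Q → Q} {e : Q} {st : Q → Q}
    (hstst : ∀ a, st (st a) = a) (hstm : ∀ a b, st (m a b) = m (st b) (st a))
    (her : ∀ a, m a e = a) : st e = e :=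
  calc st e = m (st e) e := (her _).symm
    _ = m (st e) (st (st e)) := by rw [hstst]
    _ = st (m (st e) e) := (hstm _ _).symm
    _ = e := by rw [her, hstst]

section Support

variable {Q : Type*} {m : Q → Q → Q} {e : Q} {st sp : Q → Q}

theorem support_eq_self_of_le_unit [PartialOrder Q] (hmono : ∀ a, Monotone (m a))
    (hstmono : Monotone st) (hste : st e = e) (her : ∀ a, m a e = a) (hsp2 : ∀ a, sp a ≤ m a (st a))
    (hsp3 : ∀ a, a ≤ m (sp a) a) {b : Q} (hb : b ≤ e) : sp b = b := by
  apply le_antisymm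
  · calc sp b ≤ m b (st b) := hsp2 b
      _ ≤ m b (st e) := hmono b (hstmono hb)
      _ = b := by rw [hste, her]
  · calc b ≤ m (sp b) b := hsp3 b
      _ ≤ m (sp b) e := hmono _ hb
      _ = sp b := her _

theorem support_eq_unit_inf [SemilatticeInf Q] (hspmono : Monotone sp) (hfix : ∀ b ≤ e, sp b = b)
    (hsp1 : ∀ a, sp a ≤ e) (hsp2 : ∀ a, sp a ≤ m a (st a)) (hstable : ∀ a b, sp (m a b) ≤ sp a)
    (a : Q) : sp a = e ⊓ m a (st a) := by
  refine le_antisymm (le_inf (hsp1 a) (hsp2 a)) ?_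
  calc e ⊓ m a (st a) = sp (e ⊓ m a (st a)) := (hfix _ inf_le_left).symm
    _ ≤ sp (m a (st a)) := hspmono inf_le_right
    _ ≤ sp a := hstable a (st a)

theorem eq_of_stable_support [SemilatticeInf Q] (hspmono : Monotone sp) (hfix : ∀ b ≤ e, sp b = b)
    (hstable : ∀ a b, sp (m a b) ≤ sp a) (hsp : ∀ a, sp a = e ⊓ m a (st a)) {sp' : Q → Q}
    (hsp'1 : ∀ a, sp' a ≤ e) (hsp'2 : ∀ a, sp' a ≤ m a (st a)) (hsp'3 : ∀ a, a ≤ m (sp' a) a) :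
    sp' = sp := by
  funext a
  refine le_antisymm ((le_inf (hsp'1 a) (hsp'2 a)).trans_eq (hsp a).symm) ?_
  calc sp a ≤ sp (m (sp' a) a) := hspmono (hsp'3 a)
    _ ≤ sp (sp' a) := hstable _ _
    _ = sp' a := hfix _ (hsp'1 a)

end Support

theorem stmt_5_general {Q : Type*} [CompleteLattice Q]
    (m : Q → Q → Q) (e : Q) (st : Q → Q) (sp : Q → Q)
    (hdistl : ∀ (a : Q) (T : Set Q), m a (sSup T) = sSup ((fun b => m a b) '' T))
    (her : ∀ a : Q, m a e = a)
    (hstsup : ∀ T : Set Q, st (sSup T) = sSup (st '' T))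
    (hstst : ∀ a : Q, st (st a) = a)
    (hstm : ∀ a b : Q, st (m a b) = m (st b) (st a))
    (hspsup : ∀ T : Set Q, sp (sSup T) = sSup (sp '' T))
    (hsp1 : ∀ a : Q, sp a ≤ e)
    (hsp2 : ∀ a : Q, sp a ≤ m a (st a))
    (hsp3 : ∀ a : Q, a ≤ m (sp a) a)
    (hstable : ∀ a b : Q, sp (m a b) ≤ sp a) :
    (∀ a : Q, sp a = e ⊓ m a (st a)) ∧
    (∀ sp' : Q → Q,
      (∀ T : Set Q, sp' (sSup T) = sSup (sp' '' T)) →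
      (∀ a : Q, sp' a ≤ e) →
      (∀ a : Q, sp' a ≤ m a (st a)) →
      (∀ a : Q, a ≤ m (sp' a) a) →
      sp' = sp) := by
  have hspmono := monotone_of_map_sSup hspsup
  have hfix : ∀ b ≤ e, sp b = b := fun _ hb =>
    support_eq_self_of_le_unit (fun a => monotone_of_map_sSup (hdistl a))
      (monotone_of_map_sSup hstsup) (star_unit_eq hstst hstm her) her hsp2 hsp3 hb
  have hsp := support_eq_unit_inf hspmono hfix hsp1 hsp2 hstable
  exact ⟨hsp, fun _ _ => eq_of_stable_support hspmono hfix hstable hsp⟩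

/-- A stable support satisfies `ς a = e ⊓ a a*` and is the unique support
on the quantale (Theorem `thm:fullsubcat`-1). -/
theorem stmt_5 {Q : Type*} [CompleteLattice Q]
    (m : Q → Q → Q) (e : Q) (st : Q → Q) (sp : Q → Q)
    (hassoc : ∀ a b c : Q, m (m a b) c = m a (m b c))
    (hdistl : ∀ (a : Q) (T : Set Q), m a (sSup T) = sSup ((fun b => m a b) '' T))
    (hdistr : ∀ (b : Q) (T : Set Q), m (sSup T) b = sSup ((fun a => m a b) '' T))
    (hel : ∀ a : Q, m e a = a) (her : ∀ a : Q, m a e = a)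
    (hstsup : ∀ T : Set Q, st (sSup T) = sSup (st '' T))
    (hstst : ∀ a : Q, st (st a) = a)
    (hstm : ∀ a b : Q, st (m a b) = m (st b) (st a))
    (hspsup : ∀ T : Set Q, sp (sSup T) = sSup (sp '' T))
    (hsp1 : ∀ a : Q, sp a ≤ e)
    (hsp2 : ∀ a : Q, sp a ≤ m a (st a))
    (hsp3 : ∀ a : Q, a ≤ m (sp a) a)
    (hstable : ∀ a b : Q, sp (m a b) ≤ sp a) :
    (∀ a : Q, sp a = e ⊓ m a (st a)) ∧
    (∀ sp' : Q → Q,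
      (∀ T : Set Q, sp' (sSup T) = sSup (sp' '' T)) →
      (∀ a : Q, sp' a ≤ e) →
      (∀ a : Q, sp' a ≤ m a (st a)) →
      (∀ a : Q, a ≤ m (sp' a) a) →
      sp' = sp) :=
  stmt_5_general m e st sp hdistl her hstsup hstst hstm hspsup hsp1 hsp2 hsp3 hstable
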